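/- arXiv:1511.03018 — 5 statements merged into one kernel-verified Lean document; each statement's English description precedes it below -/
import Mathlib

section
/- Let 𝒢 be a groupoid with object set M, and let Σ = (u, σ) and T = (v, τ) be bisections of 𝒢. Define the conjugation by Σ on arrows by c_Σ(γ) := inv(σ m) ≫ γ ≫ σ n for every arrow γ : m ⟶ n (so c_Σ(γ) : u(m) ⟶ u(n)), and define the bisection Σ▷T to consist of the bijection u ∘ v ∘ u⁻¹ together with the arrow c_Σ(τ(m)) : u(m) ⟶ u(v(m)) at the object u(m). Then the self-distributivity law holds: for every arrow γ of 𝒢, c_Σ(c_T(γ)) = c_{Σ▷T}(c_Σ(γ)). (Conjugation in a Lie groupoid gives a rackoid structure.) -/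
/-!
Conjugation by `S` is functorial with object map `S.u`, and the arrow of `S ▷ T` at `S.u m`
is the image `c_S(τ m)` of the arrow of `T` at `m`. Applying `c_S` to
`c_T(γ) = inv (τ m) ≫ γ ≫ τ n` therefore gives `inv (c_S(τ m)) ≫ c_S(γ) ≫ c_S(τ n)`, which is
`c_{S ▷ T}(c_S γ)`. The equality is heterogeneous only because `(S ▷ T).u (S.u m)` is
`S.u (T.u (S.u⁻¹ (S.u m)))`, propositionally but not definitionally equal to `S.u (T.u m)`.
-/

open CategoryTheory

/-- A bisection of a groupoid `𝒢` with object set `M`: a bijection `u : M ≃ M`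
together with, for each object `m`, an arrow `σ m : m ⟶ u m`. -/
structure GroupoidBisection (M : Type*) [Groupoid M] where
  u : M ≃ M
  σ : ∀ m : M, m ⟶ u m

namespace GroupoidBisection

variable {M : Type*} [Groupoid M]

/-- Conjugation of an arrow `γ : m ⟶ n` by a bisection:
`c_Σ(γ) := inv (σ m) ≫ γ ≫ σ n : u m ⟶ u n`. -/
def conj (S : GroupoidBisection M) {m n : M} (γ : m ⟶ n) : S.u m ⟶ S.u n :=
  Groupoid.inv (S.σ m) ≫ γ ≫ S.σ n

/-- The bisection `Σ ▷ T`, consisting of the bijection `u ∘ v ∘ u⁻¹` together with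
the arrow `c_Σ(τ m) : u m ⟶ u (v m)` at the object `u m`. -/
def act (S T : GroupoidBisection M) : GroupoidBisection M where
  u := S.u.symm.trans (T.u.trans S.u)
  σ := fun m => eqToHom (S.u.apply_symm_apply m).symm ≫ S.conj (T.σ (S.u.symm m))

lemma conj_comp (S : GroupoidBisection M) {a b c : M} (f : a ⟶ b) (g : b ⟶ c) :
    S.conj (f ≫ g) = S.conj f ≫ S.conj g := by
  simp [conj]

lemma conj_inv (S : GroupoidBisection M) {a b : M} (f : a ⟶ b) :
    S.conj (Groupoid.inv f) = Groupoid.inv (S.conj f) := by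
  simp [conj, Groupoid.inv_eq_inv]

lemma act_u_apply (S T : GroupoidBisection M) (m : M) :
    (S.act T).u (S.u m) = S.u (T.u m) := by
  simp [act]

lemma act_σ_apply_heq (S T : GroupoidBisection M) (m : M) :
    (S.act T).σ (S.u m) ≍ S.conj (T.σ m) := by
  refine (eqToHom_comp_heq _ _).trans ?_
  exact congr_arg_heq (fun x => S.conj (T.σ x)) (S.u.symm_apply_apply m)

lemma conj_heq_of_σ_heq (R : GroupoidBisection M) {a b x y : M} (γ : a ⟶ b)
    {φ : a ⟶ x} {ψ : b ⟶ y} (hx : R.u a = x) (hy : R.u b = y)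
    (hφ : R.σ a ≍ φ) (hψ : R.σ b ≍ ψ) :
    R.conj γ ≍ Groupoid.inv φ ≫ γ ≫ ψ := by
  subst hx hy
  cases eq_of_heq hφ
  cases eq_of_heq hψ
  rfl

end GroupoidBisection

/-- Self-distributivity of conjugation by bisections in a groupoid:
`c_Σ(c_T(γ)) = c_{Σ▷T}(c_Σ(γ))` for every arrow `γ`. -/
theorem groupoid_conj_self_distrib {M : Type*} [Groupoid M]
    (S T : GroupoidBisection M) {m n : M} (γ : m ⟶ n) :
    HEq (S.conj (T.conj γ)) ((S.act T).conj (S.conj γ)) := by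
  have hconj : S.conj (T.conj γ)
      = Groupoid.inv (S.conj (T.σ m)) ≫ S.conj γ ≫ S.conj (T.σ n) := by
    rw [GroupoidBisection.conj.eq_1 T, S.conj_comp, S.conj_comp, S.conj_inv]
  rw [hconj]
  exact ((S.act T).conj_heq_of_σ_heq _ (S.act_u_apply T m) (S.act_u_apply T n)
    (S.act_σ_apply_heq T m) (S.act_σ_apply_heq T n)).symm
end

section
/- Let Γ, M be sets with s, t : Γ → M, let B be the set of bisections (maps σ : M → Γ with s ∘ σ = id_M and t ∘ σ bijective), and let ▷ : B × Γ → Γ be an operation such that: s(σ ▷ γ) = u_σ(s(γ)) and t(σ ▷ γ) = u_σ(t(γ)) where u_σ = t ∘ σ; each σ ▷ – is a bijection of Γ; and σ ▷ (τ ▷ γ) = (σ ▷ τ) ▷ (σ ▷ γ) for all bisections σ, τ and γ ∈ Γ, where σ ▷ τ denotes the bisection m ↦ σ ▷ (τ(u_σ⁻¹(m))). Fix m ∈ M with Γ_m^m := s⁻¹(m) ∩ t⁻¹(m) nonempty, assume every γ' ∈ Γ_m^m equals σ(m) for some bisection σ, and assume σ₁ ▷ γ = σ₂ ▷ γ for all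 γ ∈ Γ and all bisections σ₁, σ₂ with σ₁(m) = σ₂(m) ∈ Γ_m^m. Then Γ_m^m carries a well-defined operation γ' ⊳ γ := σ ▷ γ (for any bisection σ with σ(m) = γ'), this operation maps Γ_m^m × Γ_m^m to Γ_m^m, each left translation γ' ⊳ – is a bijection of Γ_m^m, and ⊳ is self-distributive; i.e. the isotropy set Γ_m^m becomes a rack. -/
/-!
For a bisection `σ` with `σ m ∈ Γₘᵐ`, the map `u_σ = t ∘ σ` fixes `m`, so by the
compatibility of `▷` with `s, t` the bijection `σ ▷ -` of `Γ` restricts to a bijection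
of `Γₘᵐ`; independence of the choice of `σ` makes `γ' ⊳ γ := σ ▷ γ` well defined.
Self-distributivity is inherited from the rackoid law `σ ▷ (τ ▷ γ) = (σ ▷ τ) ▷ (σ ▷ γ)`:
since `u_σ⁻¹(m) = m`, the bisection `σ ▷ τ` passes through `σ ▷ τ(m) = γ' ⊳ τ(m)`.
-/

/-- A bisection of `s, t : Γ → M`: a right inverse `σ` of `s` such that `t ∘ σ`
is a bijection of `M`. -/
def IsBisection {Γ M : Type*} (s t : Γ → M) (σ : M → Γ) : Prop :=
  s ∘ σ = id ∧ Function.Bijective (t ∘ σ)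

open Function

abbrev Bisection {Γ M : Type*} (s t : Γ → M) := {σ : M → Γ // IsBisection s t σ}

abbrev Isotropy {Γ M : Type*} (s t : Γ → M) (m : M) := {γ : Γ // s γ = m ∧ t γ = m}

namespace Bisection

variable {Γ M : Type*} {s t : Γ → M} (σ : Bisection s t)

lemma source_apply (x : M) : s (σ.1 x) = x :=
  congrFun σ.2.1 x

/-- The bijection `u_σ = t ∘ σ` of `M`. -/
noncomputable def targetEquiv : M ≃ M :=
  Equiv.ofBijective (t ∘ σ.1) σ.2.2

@[simp]
lemma targetEquiv_apply (x : M) : σ.targetEquiv x = t (σ.1 x) :=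
  rfl

lemma invFun_eq_targetEquiv_symm [Nonempty M] (x : M) :
    invFun (t ∘ σ.1) x = σ.targetEquiv.symm x :=
  σ.2.2.1 <| (invFun_eq (σ.2.2.2 x)).trans (σ.targetEquiv.apply_symm_apply x).symm

variable {σ} {m : M}

lemma target_apply_eq_iff (hσ : t (σ.1 m) = m) (x : M) : t (σ.1 x) = m ↔ x = m :=
  ⟨fun hx => σ.2.2.1 (hx.trans hσ.symm), fun hx => hx ▸ hσ⟩

lemma targetEquiv_symm_eq (hσ : t (σ.1 m) = m) : σ.targetEquiv.symm m = m :=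
  σ.targetEquiv.symm_apply_eq.2 hσ.symm

end Bisection

structure IsRackoid {Γ M : Type*} (s t : Γ → M) (act : Bisection s t → Γ → Γ) : Prop where
  source_act : ∀ σ γ, s (act σ γ) = t (σ.1 (s γ))
  target_act : ∀ σ γ, t (act σ γ) = t (σ.1 (t γ))
  bijective_act : ∀ σ, Bijective (act σ)
  act_act : ∀ σ τ ρ : Bisection s t,
    (∀ x : M, ρ.1 x = act σ (τ.1 (@invFun M M ⟨x⟩ (t ∘ σ.1) x))) →
    ∀ γ, act σ (act τ γ) = act ρ (act σ γ)

namespace IsRackoid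

variable {Γ M : Type*} {s t : Γ → M} {act : Bisection s t → Γ → Γ}

lemma isBisection_act (h : IsRackoid s t act) (σ τ : Bisection s t) :
    IsBisection s t (fun x => act σ (τ.1 (σ.targetEquiv.symm x))) := by
  refine ⟨funext fun x => ?_, ?_⟩
  · show s (act σ _) = x
    rw [h.source_act, τ.source_apply]
    exact σ.targetEquiv.apply_symm_apply x
  · have hcomp : t ∘ (fun x => act σ (τ.1 (σ.targetEquiv.symm x)))
        = σ.targetEquiv ∘ τ.targetEquiv ∘ σ.targetEquiv.symm := by
      funext x
      simp [h.target_act]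
    rw [hcomp]
    exact σ.targetEquiv.bijective.comp
      (τ.targetEquiv.bijective.comp σ.targetEquiv.symm.bijective)

/-- The bisection `σ ▷ τ : x ↦ σ ▷ τ(u_σ⁻¹ x)`. -/
noncomputable def actBisection (h : IsRackoid s t act) (σ τ : Bisection s t) : Bisection s t :=
  ⟨fun x => act σ (τ.1 (σ.targetEquiv.symm x)), h.isBisection_act σ τ⟩

lemma act_act_eq (h : IsRackoid s t act) (σ τ : Bisection s t) (γ : Γ) :
    act σ (act τ γ) = act (h.actBisection σ τ) (act σ γ) :=
  h.act_act σ τ _ (fun x => by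
    have : Nonempty M := ⟨x⟩
    rw [σ.invFun_eq_targetEquiv_symm]
    rfl) γ

lemma actBisection_apply_of_target_eq (h : IsRackoid s t act) {σ : Bisection s t} {m : M}
    (hσ : t (σ.1 m) = m) (τ : Bisection s t) :
    (h.actBisection σ τ).1 m = act σ (τ.1 m) := by
  simp only [actBisection, Bisection.targetEquiv_symm_eq hσ]

lemma act_mem_isotropy_iff (h : IsRackoid s t act) {σ : Bisection s t} {m : M}
    (hσ : t (σ.1 m) = m) (γ : Γ) :
    (s (act σ γ) = m ∧ t (act σ γ) = m) ↔ (s γ = m ∧ t γ = m) := by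
  rw [h.source_act, h.target_act, Bisection.target_apply_eq_iff hσ,
    Bisection.target_apply_eq_iff hσ]

noncomputable def isotropyEquiv (h : IsRackoid s t act) {σ : Bisection s t} {m : M}
    (hσ : t (σ.1 m) = m) : Isotropy s t m ≃ Isotropy s t m :=
  (Equiv.ofBijective _ (h.bijective_act σ)).subtypeEquiv fun γ =>
    (h.act_mem_isotropy_iff hσ γ).symm

@[simp]
lemma isotropyEquiv_apply_coe (h : IsRackoid s t act) {σ : Bisection s t} {m : M}
    (hσ : t (σ.1 m) = m) (γ : Isotropy s t m) : (h.isotropyEquiv hσ γ).1 = act σ γ.1 :=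
  rfl

end IsRackoid

theorem rackoid_isotropy_rack_general {Γ M : Type*} (s t : Γ → M)
    (act : {σ : M → Γ // IsBisection s t σ} → Γ → Γ)
    (compat_s : ∀ (σ : {σ : M → Γ // IsBisection s t σ}) (γ : Γ),
      s (act σ γ) = t (σ.1 (s γ)))
    (compat_t : ∀ (σ : {σ : M → Γ // IsBisection s t σ}) (γ : Γ),
      t (act σ γ) = t (σ.1 (t γ)))
    (bij : ∀ σ : {σ : M → Γ // IsBisection s t σ}, Function.Bijective (act σ))
    (selfdist : ∀ σ τ ρ : {σ : M → Γ // IsBisection s t σ},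
      (∀ m : M, ρ.1 m = act σ (τ.1 (@Function.invFun M M ⟨m⟩ (t ∘ σ.1) m))) →
      ∀ γ : Γ, act σ (act τ γ) = act ρ (act σ γ))
    (m : M)
    (through : ∀ γ' : Γ, s γ' = m → t γ' = m →
      ∃ σ : {σ : M → Γ // IsBisection s t σ}, σ.1 m = γ')
    (indep : ∀ σ₁ σ₂ : {σ : M → Γ // IsBisection s t σ},
      σ₁.1 m = σ₂.1 m → s (σ₁.1 m) = m → t (σ₁.1 m) = m →
      ∀ γ : Γ, act σ₁ γ = act σ₂ γ) :
    ∃ op : {γ : Γ // s γ = m ∧ t γ = m} → {γ : Γ // s γ = m ∧ t γ = m} →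
        {γ : Γ // s γ = m ∧ t γ = m},
      (∀ (γ' γ : {γ : Γ // s γ = m ∧ t γ = m})
          (σ : {σ : M → Γ // IsBisection s t σ}),
        σ.1 m = γ'.1 → (op γ' γ).1 = act σ γ.1) ∧
      (∀ γ' : {γ : Γ // s γ = m ∧ t γ = m}, Function.Bijective (op γ')) ∧
      (∀ x y z : {γ : Γ // s γ = m ∧ t γ = m},
        op x (op y z) = op (op x y) (op x z)) := by
  have hR : IsRackoid s t act := ⟨compat_s, compat_t, bij, selfdist⟩
  choose sig hsig using fun γ' : Isotropy s t m => through γ'.1 γ'.2.1 γ'.2.2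
  have hsig_target (γ' : Isotropy s t m) : t ((sig γ').1 m) = m := (hsig γ').symm ▸ γ'.2.2
  have act_eq_act_sig (γ' : Isotropy s t m) (σ : Bisection s t) (hσ : σ.1 m = γ'.1) :
      act σ = act (sig γ') :=
    funext <| indep σ (sig γ') (hσ.trans (hsig γ').symm) (hσ ▸ γ'.2.1) (hσ ▸ γ'.2.2)
  refine ⟨fun γ' => hR.isotropyEquiv (hsig_target γ'),
    fun γ' γ σ hσ => congrFun (act_eq_act_sig γ' σ hσ).symm γ.1,
    fun γ' => Equiv.bijective _, fun x y z => Subtype.ext ?_⟩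
  have hxy : (hR.actBisection (sig x) (sig y)).1 m = (hR.isotropyEquiv (hsig_target x) y).1 := by
    rw [hR.actBisection_apply_of_target_eq (hsig_target x), hsig, hR.isotropyEquiv_apply_coe]
  simp only [hR.isotropyEquiv_apply_coe]
  rw [hR.act_act_eq, act_eq_act_sig _ _ hxy]

/-- The isotropy set of a rackoid becomes a rack: given a rackoid product `▷` of
bisections on `Γ` (compatible with `s, t`, bijective, and self-distributive), a
point `m` with `Γₘᵐ := s⁻¹(m) ∩ t⁻¹(m)` nonempty, a bisection through every point
of `Γₘᵐ`, and independence of `σ ▷ γ` on the choice of bisection `σ` through a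
given point of `Γₘᵐ`, there is a well-defined operation `γ' ⊳ γ := σ ▷ γ` on
`Γₘᵐ` whose left translations are bijections and which is self-distributive. -/
theorem rackoid_isotropy_rack {Γ M : Type*} (s t : Γ → M)
    (act : {σ : M → Γ // IsBisection s t σ} → Γ → Γ)
    (compat_s : ∀ (σ : {σ : M → Γ // IsBisection s t σ}) (γ : Γ),
      s (act σ γ) = t (σ.1 (s γ)))
    (compat_t : ∀ (σ : {σ : M → Γ // IsBisection s t σ}) (γ : Γ),
      t (act σ γ) = t (σ.1 (t γ)))
    (bij : ∀ σ : {σ : M → Γ // IsBisection s t σ}, Function.Bijective (act σ))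
    (selfdist : ∀ σ τ ρ : {σ : M → Γ // IsBisection s t σ},
      (∀ m : M, ρ.1 m = act σ (τ.1 (@Function.invFun M M ⟨m⟩ (t ∘ σ.1) m))) →
      ∀ γ : Γ, act σ (act τ γ) = act ρ (act σ γ))
    (m : M)
    (hne : ∃ γ : Γ, s γ = m ∧ t γ = m)
    (through : ∀ γ' : Γ, s γ' = m → t γ' = m →
      ∃ σ : {σ : M → Γ // IsBisection s t σ}, σ.1 m = γ')
    (indep : ∀ σ₁ σ₂ : {σ : M → Γ // IsBisection s t σ},
      σ₁.1 m = σ₂.1 m → s (σ₁.1 m) = m → t (σ₁.1 m) = m →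
      ∀ γ : Γ, act σ₁ γ = act σ₂ γ) :
    ∃ op : {γ : Γ // s γ = m ∧ t γ = m} → {γ : Γ // s γ = m ∧ t γ = m} →
        {γ : Γ // s γ = m ∧ t γ = m},
      (∀ (γ' γ : {γ : Γ // s γ = m ∧ t γ = m})
          (σ : {σ : M → Γ // IsBisection s t σ}),
        σ.1 m = γ'.1 → (op γ' γ).1 = act σ γ.1) ∧
      (∀ γ' : {γ : Γ // s γ = m ∧ t γ = m}, Function.Bijective (op γ')) ∧
      (∀ x y z : {γ : Γ // s γ = m ∧ t γ = m},
        op x (op y z) = op (op x y) (op x z)) :=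
  rackoid_isotropy_rack_general s t act compat_s compat_t bij selfdist m through indep
end

section
/- For every t ∈ ℝ, the operation on ℝ⁴ defined by (a₁,a₂,a₃,a₄) ▷_t (b₁,b₂,b₃,b₄) := (b₁, b₂, b₃, t a₁b₁ + t a₂b₂ + t a₃b₃ + a₁b₂ − a₂b₁ + b₄) is a pointed rack structure: for every a ∈ ℝ⁴ the map b ↦ a ▷_t b is a bijection of ℝ⁴, the self-distributivity law a ▷_t (b ▷_t c) = (a ▷_t b) ▷_t (a ▷_t c) holds for all a, b, c ∈ ℝ⁴, and the origin 0 is a unit: 0 ▷_t b = b and a ▷_t 0 = 0 for all a, b ∈ ℝ⁴. -/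
/-- The rack operation `▷_t` on `ℝ⁴`. -/
def rackOp (t : ℝ) (a b : ℝ × ℝ × ℝ × ℝ) : ℝ × ℝ × ℝ × ℝ :=
  (b.1, b.2.1, b.2.2.1,
    t * a.1 * b.1 + t * a.2.1 * b.2.1 + t * a.2.2.1 * b.2.2.1
      + a.1 * b.2.1 - a.2.1 * b.1 + b.2.2.2)

/-!
Split `ℝ⁴ = ℝ³ × ℝ`. Then `▷_t` is the extension of the trivial rack `x ▷ y = y` on `ℝ³`
by `ℝ` along the bilinear form `f_t(x, y) = t ⟨x, y⟩ + x₁y₂ - x₂y₁`: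
`(x, r) ▷ (y, s) = (y, s + f_t(x, y))`. For the trivial rack the cocycle condition
`f(x, z) + f(y, z) = f(y, z) + f(x, z)` is mere commutativity of addition, so every `f` gives a
rack, and bilinearity of `f_t` makes `0` a unit.
-/

section TrivialRackExt

variable {X A : Type*}

def trivialRackExt [Add A] (f : X → X → A) (a b : X × A) : X × A :=
  (b.1, b.2 + f a.1 b.1)

theorem trivialRackExt_bijective [AddGroup A] (f : X → X → A) (a : X × A) :
    Function.Bijective (trivialRackExt f a) :=
  (Equiv.prodShear (Equiv.refl X) fun x => Equiv.addRight (f a.1 x)).bijective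

theorem trivialRackExt_self_distrib [AddCommSemigroup A] (f : X → X → A) (a b c : X × A) :
    trivialRackExt f a (trivialRackExt f b c) =
      trivialRackExt f (trivialRackExt f a b) (trivialRackExt f a c) := by
  simp only [trivialRackExt, add_right_comm]

theorem trivialRackExt_zero_left [Zero X] [AddZeroClass A] {f : X → X → A}
    (hf : ∀ y, f 0 y = 0) (b : X × A) : trivialRackExt f 0 b = b := by
  simp [trivialRackExt, hf]

theorem trivialRackExt_zero_right [Zero X] [AddZeroClass A] {f : X → X → A}
    (hf : ∀ x, f x 0 = 0) (a : X × A) : trivialRackExt f a 0 = 0 := by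
  simp [trivialRackExt, hf]

end TrivialRackExt

def splitLast : ℝ × ℝ × ℝ × ℝ ≃ (ℝ × ℝ × ℝ) × ℝ where
  toFun a := ((a.1, a.2.1, a.2.2.1), a.2.2.2)
  invFun x := (x.1.1, x.1.2.1, x.1.2.2, x.2)
  left_inv _ := rfl
  right_inv _ := rfl

def rackCocycle (t : ℝ) (x y : ℝ × ℝ × ℝ) : ℝ :=
  t * (x.1 * y.1 + x.2.1 * y.2.1 + x.2.2 * y.2.2) + (x.1 * y.2.1 - x.2.1 * y.1)

theorem rackOp_eq_conj_trivialRackExt (t : ℝ) (a b : ℝ × ℝ × ℝ × ℝ) :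
    rackOp t a b = splitLast.symm (trivialRackExt (rackCocycle t) (splitLast a) (splitLast b)) := by
  simp only [rackOp, trivialRackExt, rackCocycle, splitLast, Equiv.coe_fn_mk,
    Equiv.coe_fn_symm_mk, Prod.mk.injEq, true_and]
  ring

/-- For every `t`, `▷_t` is a pointed rack structure on `ℝ⁴`: left translations are
bijections, self-distributivity holds, and `0` is a unit. -/
theorem rackOp_pointed_rack (t : ℝ) :
    (∀ a : ℝ × ℝ × ℝ × ℝ, Function.Bijective (rackOp t a)) ∧
    (∀ a b c : ℝ × ℝ × ℝ × ℝ,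
      rackOp t a (rackOp t b c) = rackOp t (rackOp t a b) (rackOp t a c)) ∧
    (∀ b : ℝ × ℝ × ℝ × ℝ, rackOp t 0 b = b) ∧
    (∀ a : ℝ × ℝ × ℝ × ℝ, rackOp t a 0 = 0) := by
  have hsplit : splitLast 0 = 0 := rfl
  refine ⟨fun a => ?_, fun a b c => ?_, fun b => ?_, fun a => ?_⟩
  · have h : rackOp t a =
        splitLast.symm ∘ trivialRackExt (rackCocycle t) (splitLast a) ∘ splitLast :=
      funext (rackOp_eq_conj_trivialRackExt t a)
    rw [h]
    exact splitLast.symm.bijective.comp ((trivialRackExt_bijective _ _).comp splitLast.bijective)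
  · simp only [rackOp_eq_conj_trivialRackExt, Equiv.apply_symm_apply]
    exact congrArg splitLast.symm (trivialRackExt_self_distrib _ _ _ _)
  · rw [rackOp_eq_conj_trivialRackExt, hsplit,
      trivialRackExt_zero_left (fun y => by simp [rackCocycle]), Equiv.symm_apply_apply]
  · rw [rackOp_eq_conj_trivialRackExt, hsplit,
      trivialRackExt_zero_right (fun x => by simp [rackCocycle]), ← hsplit, Equiv.symm_apply_apply]
end

section
/- For every t ≠ 0 there is no rack isomorphism between (ℝ⁴, ▷_t) and (ℝ⁴, ▷_0); that is, there is no bijection f : ℝ⁴ → ℝ⁴ satisfying f(a ▷_t b) = f(a) ▷_0 f(b) for all a, b ∈ ℝ⁴. Indeed a ▷_0 a = a for all a ∈ ℝ⁴, while for t ≠ 0 there exists a ∈ ℝ⁴ with a ▷_t a ≠ a. Consequently the bundle of Lie racks (ℝ⁴ × ℝ, ▷_t) over ℝ is not isomorphic to a trivial bundle of racks. -/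
/-!
Idempotence `a ▷ a = a` is transported backwards along any injective homomorphism of
binary operations. Since `a ▷_t a` shifts the last coordinate of `a` by `t |(a₁, a₂, a₃)|²`,
`▷_0` is idempotent while `▷_t` is not for `t ≠ 0`, so no isomorphism can exist.
-/

theorem op_self_eq_of_injective_hom {α β : Type*} {op : α → α → α} {op' : β → β → β}
    {f : α → β} (hf : Function.Injective f) (hf_op : ∀ a b, f (op a b) = op' (f a) (f b))
    (h_idem : ∀ b, op' b b = b) (a : α) : op a a = a :=
  hf (by rw [hf_op, h_idem])

theorem rackOp_self (t : ℝ) (a : ℝ × ℝ × ℝ × ℝ) :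
    rackOp t a a = (a.1, a.2.1, a.2.2.1, t * (a.1 ^ 2 + a.2.1 ^ 2 + a.2.2.1 ^ 2) + a.2.2.2) := by
  simp only [rackOp, Prod.mk.injEq, true_and]
  ring

theorem rackOp_zero_self (a : ℝ × ℝ × ℝ × ℝ) : rackOp 0 a a = a := by
  simp [rackOp_self]

theorem rackOp_self_ne_of_ne_zero {t : ℝ} (ht : t ≠ 0) :
    rackOp t (1, 0, 0, 0) (1, 0, 0, 0) ≠ (1, 0, 0, 0) := by
  simp [rackOp_self, ht]

/-- For `t ≠ 0` the racks `(ℝ⁴, ▷_t)` and `(ℝ⁴, ▷_0)` are not isomorphic: indeed,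
`a ▷₀ a = a` always, while for `t ≠ 0` some `a` has `a ▷_t a ≠ a`; in particular
there is no bijection `f` with `f (a ▷_t b) = f a ▷₀ f b`. Hence the bundle of
Lie racks `(ℝ⁴ × ℝ, ▷_t)` over `ℝ` is non-trivial. -/
theorem rackOp_t_not_isomorphic_to_rackOp_zero :
    (∀ a : ℝ × ℝ × ℝ × ℝ, rackOp 0 a a = a) ∧
    (∀ t : ℝ, t ≠ 0 →
      (∃ a : ℝ × ℝ × ℝ × ℝ, rackOp t a a ≠ a) ∧
      ¬ ∃ f : (ℝ × ℝ × ℝ × ℝ) → (ℝ × ℝ × ℝ × ℝ),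
          Function.Bijective f ∧
          ∀ a b : ℝ × ℝ × ℝ × ℝ, f (rackOp t a b) = rackOp 0 (f a) (f b)) := by
  refine ⟨rackOp_zero_self, fun t ht => ⟨⟨_, rackOp_self_ne_of_ne_zero ht⟩, ?_⟩⟩
  rintro ⟨f, hf, hf_op⟩
  exact rackOp_self_ne_of_ne_zero ht
    (op_self_eq_of_injective_hom hf.injective hf_op rackOp_zero_self _)
end

section
/- For all t ∈ ℝ and a, b ∈ ℝ⁴, the mixed second derivative at (0,0) of the map (s, u) ↦ (s•a) ▷_t (u•b) equals the Leibniz bracket [a,b]_t; precisely, the derivative at s = 0 of the function s ↦ (d/du)|_{u=0} ((s•a) ▷_t (u•b)) equals (0,0,0, t a₁b₁ + t a₂b₂ + t a₃b₃ + a₁b₂ − a₂b₁) = [a,b]_t. (The Lie rack ▷_t integrates the Leibniz algebra 𝔤_t.) -/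
/-- The bracket `[·,·]_t` on `ℝ⁴`. -/
def leibnizBracket (t : ℝ) (X Y : ℝ × ℝ × ℝ × ℝ) : ℝ × ℝ × ℝ × ℝ :=
  (0, 0, 0,
    t * X.1 * Y.1 + X.1 * Y.2.1 - X.2.1 * Y.1 + t * X.2.1 * Y.2.1
      + t * X.2.2.1 * Y.2.2.1)

/- The rack operation is `a ▷_t b = b + [a,b]_t` with `[·,·]_t` bilinear, so
`(s • a) ▷_t (u • b) = u • (b + s • [a,b]_t)`: differentiating in `u` leaves `b + s • [a,b]_t`,
and then differentiating in `s` leaves `[a,b]_t`. -/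

theorem deriv_deriv_add_of_smul_smul {𝕜 E : Type*} [NontriviallyNormedField 𝕜]
    [NormedAddCommGroup E] [NormedSpace 𝕜 E] (B : E → E → E)
    (hB : ∀ (s u : 𝕜) (x y : E), B (s • x) (u • y) = (s * u) • B x y) (a b : E) :
    deriv (fun s : 𝕜 => deriv (fun u : 𝕜 => u • b + B (s • a) (u • b)) 0) 0 = B a b := by
  have hinner (s : 𝕜) : deriv (fun u : 𝕜 => u • b + B (s • a) (u • b)) 0 = b + s • B a b := by
    have hfun : (fun u : 𝕜 => u • b + B (s • a) (u • b)) = fun u => u • (b + s • B a b) := by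
      funext u
      rw [hB, smul_add, mul_comm, mul_smul]
    rw [hfun]
    simpa using (hasDerivAt_id (0 : 𝕜)).smul_const (b + s • B a b) |>.deriv
  simp_rw [hinner]
  simpa using ((hasDerivAt_id (0 : 𝕜)).smul_const (B a b)).const_add b |>.deriv

theorem rackOp_eq_add_leibnizBracket (t : ℝ) (a b : ℝ × ℝ × ℝ × ℝ) :
    rackOp t a b = b + leibnizBracket t a b := by
  obtain ⟨b₁, b₂, b₃, b₄⟩ := b
  simp only [rackOp, leibnizBracket, Prod.mk_add_mk, add_zero, Prod.mk.injEq, true_and]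
  ring

theorem leibnizBracket_smul_smul (t s u : ℝ) (a b : ℝ × ℝ × ℝ × ℝ) :
    leibnizBracket t (s • a) (u • b) = (s * u) • leibnizBracket t a b := by
  simp only [leibnizBracket, Prod.smul_fst, Prod.smul_snd, Prod.smul_mk, smul_eq_mul, mul_zero,
    Prod.mk.injEq, true_and]
  ring

/-- The mixed second derivative at `(0,0)` of `(s, u) ↦ (s • a) ▷_t (u • b)` equals
`(0,0,0, t a₁b₁ + t a₂b₂ + t a₃b₃ + a₁b₂ − a₂b₁) = [a,b]_t`: the Lie rack `▷_t`
integrates the Leibniz algebra `𝔤_t`. -/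
theorem rackOp_differentiates_to_leibnizBracket (t : ℝ) (a b : ℝ × ℝ × ℝ × ℝ) :
    deriv (fun s : ℝ => deriv (fun u : ℝ => rackOp t (s • a) (u • b)) 0) 0
      = (0, 0, 0,
          t * a.1 * b.1 + t * a.2.1 * b.2.1 + t * a.2.2.1 * b.2.2.1
            + a.1 * b.2.1 - a.2.1 * b.1) ∧
    ((0, 0, 0,
        t * a.1 * b.1 + t * a.2.1 * b.2.1 + t * a.2.2.1 * b.2.2.1
          + a.1 * b.2.1 - a.2.1 * b.1) : ℝ × ℝ × ℝ × ℝ)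
      = leibnizBracket t a b := by
  have hbracket : ((0, 0, 0,
      t * a.1 * b.1 + t * a.2.1 * b.2.1 + t * a.2.2.1 * b.2.2.1
        + a.1 * b.2.1 - a.2.1 * b.1) : ℝ × ℝ × ℝ × ℝ) = leibnizBracket t a b := by
    simp only [leibnizBracket, Prod.mk.injEq, true_and]
    ring
  refine ⟨?_, hbracket⟩
  simp_rw [hbracket, rackOp_eq_add_leibnizBracket]
  exact deriv_deriv_add_of_smul_smul (leibnizBracket t) (leibnizBracket_smul_smul t) a b
end
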